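/- In the codimension-2 biconservative setting with nonzero parallel mean curvature, if the kernel E_0(H) of A_H is one-dimensional (hence E_0(H) = span{T}), then f belongs to class 𝒜, i.e., T is an eigenvector of every shape operator of f. -/

import Mathlib

open scoped BigOperators

/-! Abstract model of an isometric immersion `f : M^m → Q^n_ε × ℝ ⊂ E^{n+2}`,
where `Q^n_ε` is the unit sphere (`ε = 1`) or hyperbolic space (`ε = -1`) and
`E^{n+2}` is Euclidean or Lorentzian space.  Here `R` plays the role of the ring
of smooth functions on `M`, `TM` of the tangent vector fields of `M`, `NM` of
the normal vector fields along `f` (normal inside `T(Q^n_ε × ℝ)`), and `AM` of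
the vector fields along `f` with values in `E^{n+2}`. -/

/-- The curvature tensor of the product `Q^n_ε × ℝ`:
`R̃(Z,W)V = ε (⟨W',V'⟩ Z' - ⟨Z',V'⟩ W')`, where `Z' = Z - ⟨Z,∂t⟩ ∂t` is the
component of `Z` tangent to the `Q^n_ε`-factor. -/
def prodCurv {R AM : Type*} [CommRing R] [Algebra ℝ R] [AddCommGroup AM] [Module R AM]
    (ε : ℝ) (g : AM →ₗ[R] AM →ₗ[R] R) (dt : AM) (Z W V : AM) : AM :=
  algebraMap ℝ R ε •
    ((g W V - g W dt * g V dt) • (Z - g Z dt • dt)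
      - (g Z V - g Z dt * g V dt) • (W - g W dt • dt))

structure Setup (ε : ℝ) (m : ℕ) (R : Type*) [CommRing R] [Algebra ℝ R]
    (TM NM AM : Type*) [AddCommGroup TM] [Module R TM]
    [AddCommGroup NM] [Module R NM] [AddCommGroup AM] [Module R AM] : Type _ where
  /-- the differential of `f` -/
  ι : TM →ₗ[R] AM
  /-- the inclusion of the normal bundle -/
  ν : NM →ₗ[R] AM
  /-- tangential projection -/
  tanPr : AM →ₗ[R] TM
  /-- normal projection -/
  norPr : AM →ₗ[R] NM
  split : ∀ Z, ι (tanPr Z) + ν (norPr Z) = Z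
  tan_ι : ∀ X, tanPr (ι X) = X
  nor_ν : ∀ ξ, norPr (ν ξ) = ξ
  nor_ι : ∀ X, norPr (ι X) = 0
  tan_ν : ∀ ξ, tanPr (ν ξ) = 0
  /-- the (possibly Lorentzian) metric of `E^{n+2}` along `f` -/
  g : AM →ₗ[R] AM →ₗ[R] R
  g_symm : ∀ Z W, g Z W = g W Z
  g_tan_nor : ∀ X ξ, g (ι X) (ν ξ) = 0
  /-- the action of a tangent vector field on a function -/
  act : TM → R → R
  act_add : ∀ X a b, act X (a + b) = act X a + act X b
  act_mul : ∀ X a b, act X (a * b) = a * act X b + b * act X a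
  act_const : ∀ X (r : ℝ), act X (algebraMap ℝ R r) = 0
  /-- the Lie bracket of vector fields on `M` -/
  bracket : TM → TM → TM
  /-- the Levi-Civita connection of `Q^n_ε × ℝ` along `f` -/
  D : TM → AM → AM
  D_add : ∀ X Z W, D X (Z + W) = D X Z + D X W
  D_smul : ∀ X (a : R) Z, D X (a • Z) = act X a • Z + a • D X Z
  /-- the Levi-Civita connection of `M` -/
  conn : TM → TM → TM
  conn_add : ∀ X Y Z, conn X (Y + Z) = conn X Y + conn X Z
  conn_smul : ∀ X (a : R) Y, conn X (a • Y) = act X a • Y + a • conn X Y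
  /-- the normal connection `∇^⊥` -/
  nconn : TM → NM → NM
  nconn_add : ∀ X ξ ζ, nconn X (ξ + ζ) = nconn X ξ + nconn X ζ
  nconn_smul : ∀ X (a : R) ξ, nconn X (a • ξ) = act X a • ξ + a • nconn X ξ
  /-- the second fundamental form `α_f` -/
  alpha : TM →ₗ[R] TM →ₗ[R] NM
  alpha_symm : ∀ X Y, alpha X Y = alpha Y X
  /-- the shape operators `A_ξ` -/
  A : NM →ₗ[R] TM →ₗ[R] TM
  shape : ∀ ξ X Y, g (ι (A ξ X)) (ι Y) = g (ν (alpha X Y)) (ν ξ)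
  /-- the Gauss formula -/
  gauss : ∀ X Y, D X (ι Y) = ι (conn X Y) + ν (alpha X Y)
  /-- the Weingarten formula -/
  weingarten : ∀ X ξ, D X (ν ξ) = - ι (A ξ X) + ν (nconn X ξ)
  metric : ∀ X Z W, act X (g Z W) = g (D X Z) W + g Z (D X W)
  torsion : ∀ X Y, conn X Y - conn Y X = bracket X Y
  /-- the Codazzi equation in `Q^n_ε × ℝ` -/
  codazzi : ∀ X Y Z,
    (nconn X (alpha Y Z) - alpha (conn X Y) Z - alpha Y (conn X Z))
      - (nconn Y (alpha X Z) - alpha (conn Y X) Z - alpha X (conn Y Z))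
      = norPr (prodCurv ε g dt (ι X) (ι Y) (ι Z))
  /-- the Ricci equation in `Q^n_ε × ℝ` -/
  ricci : ∀ X Y ξ,
    nconn X (nconn Y ξ) - nconn Y (nconn X ξ) - nconn (bracket X Y) ξ
      = norPr (prodCurv ε g dt (ι X) (ι Y) (ν ξ))
        + alpha X (A ξ Y) - alpha (A ξ X) Y
  /-- the unit vector field tangent to the `ℝ`-factor -/
  dt : AM
  dt_parallel : ∀ X, D X dt = 0
  dt_unit : g dt dt = 1
  /-- the position vector field, i.e. `f` itself, regarded in `E^{n+2}` -/
  pos : AM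
  /-- the flat connection `∇̂` of `E^{n+2}` along `f` -/
  Dhat : TM → AM → AM
  Dhat_add : ∀ X Z W, Dhat X (Z + W) = Dhat X Z + Dhat X W
  Dhat_smul : ∀ X (a : R) Z, Dhat X (a • Z) = act X a • Z + a • Dhat X Z
  Dhat_pos : ∀ X, Dhat X pos = ι X
  Dhat_dt : ∀ X, Dhat X dt = 0
  Dhat_metric : ∀ X Z W, act X (g Z W) = g (Dhat X Z) W + g Z (Dhat X W)
  /-- relation between `∇̂` and the connection of `Q^n_ε × ℝ` via the second
  fundamental form of the inclusion `Q^n_ε × ℝ ⊂ E^{n+2}` -/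
  Dhat_ι : ∀ X Y, Dhat X (ι Y) = D X (ι Y)
    - (algebraMap ℝ R ε * (g (ι X) (ι Y) - g (ι X) dt * g (ι Y) dt)) •
        (pos - g pos dt • dt)
  Dhat_ν : ∀ X ξ, Dhat X (ν ξ) = D X (ν ξ)
    - (algebraMap ℝ R ε * (g (ι X) (ν ξ) - g (ι X) dt * g (ν ξ) dt)) •
        (pos - g pos dt • dt)
  /-- `f` takes values in `Q^n_ε × ℝ` -/
  pos_norm : g (pos - g pos dt • dt) (pos - g pos dt • dt) = algebraMap ℝ R ε

namespace Setup

variable {ε : ℝ} {m : ℕ} {R TM NM AM : Type*} [CommRing R] [Algebra ℝ R]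
  [AddCommGroup TM] [Module R TM] [AddCommGroup NM] [Module R NM]
  [AddCommGroup AM] [Module R AM]

variable (S : Setup ε m R TM NM AM)

/-- the tangent part `T` of `∂t`, so that `∂t = f_* T + η` -/
def T : TM := S.tanPr S.dt

/-- the normal part `η` of `∂t`, so that `∂t = f_* T + η` -/
def eta : NM := S.norPr S.dt

/-- the induced metric on `M` -/
def gT (X Y : TM) : R := S.g (S.ι X) (S.ι Y)

/-- the metric of the normal bundle -/
def gN (ξ ζ : NM) : R := S.g (S.ν ξ) (S.ν ζ)

/-- the curvature tensor `R̃` of `Q^n_ε × ℝ` along `f` -/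
def Rcurv (Z W V : AM) : AM := prodCurv ε S.g S.dt Z W V

/-- `e` is a (local) orthonormal tangent frame of `M` -/
def IsONFrame (e : Fin m → TM) : Prop :=
  (∀ i j, S.gT (e i) (e j) = if i = j then 1 else 0) ∧
  (∀ X : TM, X = ∑ i, S.gT X (e i) • e i)

/-- `H` is the mean curvature vector field: `m H = trace α_f` -/
def IsMeanCurv (e : Fin m → TM) (H : NM) : Prop :=
  (m : R) • H = ∑ i, S.alpha (e i) (e i)

/-- `H` is parallel in the normal bundle -/
def IsParallelN (H : NM) : Prop := ∀ X, S.nconn X H = 0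

/-- `f` is biconservative: the tangent part of the bitension field vanishes,
i.e. `m grad‖H‖² + 4 trace A_{∇^⊥H} + 4 trace (R̃(·,H)·)^T = 0` (paired with an
arbitrary tangent field `Y`, which expresses the gradient term weakly). -/
def Biconservative (e : Fin m → TM) (H : NM) : Prop :=
  ∀ Y : TM,
    (m : R) * S.act Y (S.gN H H)
      + 4 * (∑ i, S.gT (S.A (S.nconn (e i) H) (e i)) Y)
      + 4 * (∑ i, S.gT (S.tanPr (S.Rcurv (S.ι (e i)) (S.ν H) (S.ι (e i)))) Y) = 0

/-- the normal part of the bitension field vanishes: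
`trace α_f(A_H ·, ·) - Δ^⊥ H + 2 trace (R̃(·,H)·)^⊥ = 0` -/
def NormalBitensionZero (e : Fin m → TM) (H : NM) : Prop :=
  (∑ i, S.alpha (S.A H (e i)) (e i))
    - (∑ i, (S.nconn (e i) (S.nconn (e i) H) - S.nconn (S.conn (e i) (e i)) H))
    + 2 • (∑ i, S.norPr (S.Rcurv (S.ι (e i)) (S.ν H) (S.ι (e i)))) = 0

/-- `f` is biharmonic: the full bitension field vanishes. -/
def Biharmonic (e : Fin m → TM) (H : NM) : Prop :=
  S.Biconservative e H ∧ S.NormalBitensionZero e H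

/-- a vector field is nowhere vanishing (in the function-ring model: it is not
annihilated by any nonzero function) -/
def NowhereZero (_S₀ : Setup ε m R TM NM AM) (X : TM) : Prop :=
  ∀ a : R, a • X = 0 → a = 0

/-- a normal field is nowhere vanishing -/
def NowhereZeroN (_S₀ : Setup ε m R TM NM AM) (ξ : NM) : Prop :=
  ∀ a : R, a • ξ = 0 → a = 0

/-- `f` belongs to the class `𝒜`: `T` is an eigenvector of every shape
operator of `f` -/
def ClassA : Prop := ∀ ξ : NM, ∃ r : R, S.A ξ S.T = r • S.T

end Setup

/-- The symmetric bilinear form of `E⁶` (Euclidean for `ε = 1`, Lorentzian for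
`ε = -1`), the last coordinate corresponding to the `ℝ`-factor of `Q⁴_ε × ℝ`. -/
def bform (ε : ℝ) (v w : Fin 6 → ℝ) : ℝ :=
  v 0 * w 0 + v 1 * w 1 + v 2 * w 2 + v 3 * w 3 + ε * (v 4 * w 4) + v 5 * w 5

/-!
Parallel `H` kills the first two terms of the biconservative equation, and the remaining
curvature term is `ε (n - 1) ⟨H, η⟩ T`; as `T` vanishes nowhere, `⟨H, η⟩ = 0` once `n ≠ 1`
(for `n = 1` there is nothing to prove).
Then `∇^⊥_X η = -α(X, T)` is orthogonal to `H`, i.e. `A_H T = 0`, and the Ricci equation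
(whose curvature term now vanishes) makes every `A_ξ` commute with `A_H`. Hence
`A_H (A_ξ T) = A_ξ (A_H T) = 0`, so `A_ξ T ∈ ker A_H = span {T}`.
-/

namespace Setup

variable {ε : ℝ} {m : ℕ} {R TM NM AM : Type*} [CommRing R] [Algebra ℝ R]
  [AddCommGroup TM] [Module R TM] [AddCommGroup NM] [Module R NM]
  [AddCommGroup AM] [Module R AM]
  (S : Setup ε m R TM NM AM)

theorem act_zero (X : TM) : S.act X 0 = 0 := by
  simpa using S.act_add X 0 0

theorem nconn_zero (X : TM) : S.nconn X 0 = 0 := by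
  simpa using S.nconn_add X 0 0

theorem gT_comm (X Y : TM) : S.gT X Y = S.gT Y X := S.g_symm _ _

theorem gN_comm (ξ ζ : NM) : S.gN ξ ζ = S.gN ζ ξ := S.g_symm _ _

theorem g_ν_ι (ξ : NM) (X : TM) : S.g (S.ν ξ) (S.ι X) = 0 := by
  rw [S.g_symm]
  exact S.g_tan_nor X ξ

theorem dt_eq : S.dt = S.ι S.T + S.ν S.eta := (S.split S.dt).symm

theorem g_ι_dt (X : TM) : S.g (S.ι X) S.dt = S.gT X S.T := by
  simp [dt_eq, gT, S.g_tan_nor]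

theorem g_ν_dt (ξ : NM) : S.g (S.ν ξ) S.dt = S.gN ξ S.eta := by
  simp [dt_eq, gN, g_ν_ι]

theorem act_gN (X : TM) (ξ ζ : NM) :
    S.act X (S.gN ξ ζ) = S.gN (S.nconn X ξ) ζ + S.gN ξ (S.nconn X ζ) := by
  simpa [gN, S.weingarten, S.g_tan_nor, g_ν_ι] using S.metric X (S.ν ξ) (S.ν ζ)

theorem act_gN_self_of_parallel {H : NM} (hpar : S.IsParallelN H) (X : TM) :
    S.act X (S.gN H H) = 0 := by
  rw [act_gN, hpar X]
  simp [gN]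

/-- The normal part of `D_X ∂t = 0`. -/
theorem nconn_eta (X : TM) : S.nconn X S.eta = -S.alpha X S.T := by
  have h := congrArg S.norPr (S.dt_parallel X)
  rw [dt_eq, S.D_add, S.gauss, S.weingarten] at h
  simp only [map_add, map_neg, map_zero, S.nor_ι, S.nor_ν, zero_add, neg_zero] at h
  exact eq_neg_of_add_eq_zero_right h

theorem gT_tanPr_Rcurv {X : TM} (hX : S.gT X X = 1) (ξ : NM) (Y : TM) :
    S.gT (S.tanPr (S.Rcurv (S.ι X) (S.ν ξ) (S.ι X))) Y
      = algebraMap ℝ R ε * S.gN ξ S.eta * (S.gT S.T Y - S.gT X S.T * S.gT X Y) := by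
  have hXX : S.g (S.ι X) (S.ι X) = 1 := hX
  have htan : S.tanPr S.dt = S.T := rfl
  unfold Rcurv prodCurv
  rw [g_ν_ι, g_ν_dt, g_ι_dt, hXX]
  simp only [map_smul, map_sub, S.tan_ι, S.tan_ν, htan, gT, LinearMap.sub_apply,
    LinearMap.smul_apply, smul_eq_mul, map_zero, LinearMap.zero_apply]
  ring

theorem Rcurv_ι_ι_ν_eq_zero {ξ : NM} (hξ : S.gN ξ S.eta = 0) (X Y : TM) :
    S.Rcurv (S.ι X) (S.ι Y) (S.ν ξ) = 0 := by
  simp [Rcurv, prodCurv, S.g_tan_nor, g_ν_dt, hξ]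

/-- The Ricci equation for `H`: both its left side and its curvature term vanish. -/
theorem alpha_A_comm {H : NM} (hpar : S.IsParallelN H) (hHeta : S.gN H S.eta = 0)
    (X Y : TM) : S.alpha X (S.A H Y) = S.alpha (S.A H X) Y := by
  have h := S.ricci (dt := S.dt) X Y H
  rw [hpar, hpar, hpar, nconn_zero, nconn_zero, ← Rcurv, Rcurv_ι_ι_ν_eq_zero S hHeta,
    map_zero, sub_zero, zero_add, sub_zero] at h
  exact sub_eq_zero.mp h.symm

section Frame

variable {S} {e : Fin m → TM}

theorem IsONFrame.gT_self (he : S.IsONFrame e) (i : Fin m) : S.gT (e i) (e i) = 1 := by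
  simpa using he.1 i i

theorem IsONFrame.ext (he : S.IsONFrame e) {X X' : TM} (h : ∀ Y, S.gT X Y = S.gT X' Y) :
    X = X' := by
  rw [he.2 X, he.2 X']
  simp only [h]

theorem IsONFrame.gT_eq_sum (he : S.IsONFrame e) (X Y : TM) :
    S.gT X Y = ∑ i, S.gT X (e i) * S.gT (e i) Y := by
  conv_lhs => rw [he.2 X]
  simp [gT, map_sum, LinearMap.sum_apply, map_smul, smul_eq_mul]

theorem IsONFrame.sum_gT_tanPr_Rcurv (he : S.IsONFrame e) (ξ : NM) (Y : TM) :
    ∑ i, S.gT (S.tanPr (S.Rcurv (S.ι (e i)) (S.ν ξ) (S.ι (e i)))) Y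
      = algebraMap ℝ R ε * S.gN ξ S.eta * (((m : R) - 1) * S.gT S.T Y) := by
  simp only [S.gT_tanPr_Rcurv (he.gT_self _), ← Finset.mul_sum, Finset.sum_sub_distrib,
    Finset.sum_const, Finset.card_univ, Fintype.card_fin, nsmul_eq_mul]
  rw [he.gT_eq_sum S.T Y]
  simp only [S.gT_comm (e _) S.T]
  ring

theorem IsONFrame.A_comm {H : NM} (he : S.IsONFrame e) (hpar : S.IsParallelN H)
    (hHeta : S.gN H S.eta = 0) (ξ : NM) (X : TM) :
    S.A H (S.A ξ X) = S.A ξ (S.A H X) := by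
  refine he.ext fun Y => ?_
  calc S.gT (S.A H (S.A ξ X)) Y = S.gN (S.alpha Y (S.A ξ X)) H := by
        rw [S.alpha_symm]; exact S.shape H _ Y
    _ = S.gT (S.A ξ X) (S.A H Y) := by rw [S.gT_comm]; exact (S.shape H Y _).symm
    _ = S.gN (S.alpha (S.A H X) Y) ξ := by rw [← S.alpha_A_comm hpar hHeta]; exact S.shape ξ _ _
    _ = S.gT (S.A ξ (S.A H X)) Y := (S.shape ξ _ Y).symm

theorem IsONFrame.A_T_eq_zero {H : NM} (he : S.IsONFrame e) (hpar : S.IsParallelN H)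
    (hHeta : S.gN H S.eta = 0) : S.A H S.T = 0 := by
  refine he.ext fun X => ?_
  have hperp : S.gN (S.nconn X S.eta) H = 0 := by
    have h := S.act_gN X S.eta H
    rw [hpar X, S.gN_comm S.eta, hHeta, act_zero] at h
    simpa [gN] using h.symm
  calc S.gT (S.A H S.T) X = S.gN (S.alpha X S.T) H := by rw [S.alpha_symm]; exact S.shape H _ X
    _ = 0 := by simpa [nconn_eta, gN] using hperp
    _ = S.gT 0 X := by simp [gT]

theorem IsONFrame.gN_eta_eq_zero_of_biconservative {H : NM} (he : S.IsONFrame e)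
    (hε : ε ≠ 0) (hm : m ≠ 1) (hpar : S.IsParallelN H) (hbic : S.Biconservative e H)
    (hT : S.NowhereZero S.T) : S.gN H S.eta = 0 := by
  have hunit : IsUnit (algebraMap ℝ R (4 * ε * (m - 1))) :=
    (IsUnit.mk0 _ (by simpa [sub_eq_zero] using And.intro hε hm)).map _
  refine hunit.mul_right_eq_zero.mp (hT _ (he.ext fun Y => ?_))
  have hA : ∀ i, S.A (S.nconn (e i) H) (e i) = 0 := fun i => by
    rw [hpar, map_zero, LinearMap.zero_apply]
  have h := hbic Y
  rw [he.sum_gT_tanPr_Rcurv] at h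
  simp only [act_gN_self_of_parallel S hpar, hA, gT, map_zero, LinearMap.zero_apply,
    Finset.sum_const_zero] at h
  simp only [gT, map_smul, LinearMap.smul_apply, smul_eq_mul, map_zero, LinearMap.zero_apply,
    map_mul, map_sub, map_natCast, map_one, map_ofNat]
  linear_combination h

end Frame

theorem IsONFrame.classA_of_dim_one {S : Setup ε 1 R TM NM AM} {e : Fin 1 → TM}
    (he : S.IsONFrame e) : S.ClassA := by
  have hexp : ∀ X : TM, X = S.gT X (e 0) • e 0 := fun X => by
    simpa using he.2 X
  intro ξ
  refine ⟨S.gT (S.A ξ (e 0)) (e 0), ?_⟩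
  conv_lhs => rw [hexp S.T, map_smul, hexp (S.A ξ (e 0))]
  conv_rhs => rw [hexp S.T]
  rw [smul_smul, smul_smul, mul_comm]

end Setup

theorem stmt_8_general {ε : ℝ} (hε : ε = 1 ∨ ε = -1) {n : ℕ} {R TM NM AM : Type*}
    [CommRing R] [Algebra ℝ R] [AddCommGroup TM] [Module R TM]
    [AddCommGroup NM] [Module R NM] [AddCommGroup AM] [Module R AM]
    (S : Setup ε n R TM NM AM)
    (e : Fin n → TM) (H : NM) (he : S.IsONFrame e)
    (hpar : S.IsParallelN H)
    (hbic : S.Biconservative e H)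
    (hT : S.NowhereZero S.T)
    (hE0 : ∀ X : TM, S.A H X = 0 → ∃ r : R, X = r • S.T) :
    S.ClassA := by
  rcases eq_or_ne n 1 with rfl | hn
  · exact he.classA_of_dim_one
  have hε0 : ε ≠ 0 := by rcases hε with rfl | rfl <;> norm_num
  have hHeta := he.gN_eta_eq_zero_of_biconservative hε0 hn hpar hbic hT
  intro ξ
  apply hE0
  rw [he.A_comm hpar hHeta, he.A_T_eq_zero hpar hHeta, map_zero]

/-- In the codimension-2 biconservative setting with nonzero parallel mean
curvature, if `E_0(H)` is one-dimensional (hence spanned by `T`), then `f`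
belongs to the class `𝒜`. -/
theorem stmt_8 {ε : ℝ} (hε : ε = 1 ∨ ε = -1) {n : ℕ} {R TM NM AM : Type*}
    [CommRing R] [Algebra ℝ R] [AddCommGroup TM] [Module R TM]
    [AddCommGroup NM] [Module R NM] [AddCommGroup AM] [Module R AM]
    (S : Setup ε n R TM NM AM)
    (e : Fin n → TM) (H : NM) (he : S.IsONFrame e) (hH : S.IsMeanCurv e H)
    (hpar : S.IsParallelN H) (hH0 : H ≠ 0)
    (hbic : S.Biconservative e H) (heta : S.NowhereZeroN S.eta)
    (hT : S.NowhereZero S.T)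
    (ξ₁ ξ₂ : NM) (nH nE : R) (hu1 : S.gN ξ₁ ξ₁ = 1) (hH1 : H = nH • ξ₁)
    (hu2 : S.gN ξ₂ ξ₂ = 1) (hetadec : S.eta = nE • ξ₂)
    (hspan : ∀ ζ : NM, ∃ r s : R, ζ = r • ξ₁ + s • ξ₂)
    (hE0 : ∀ X : TM, S.A H X = 0 → ∃ r : R, X = r • S.T) :
    S.ClassA :=
  stmt_8_general hε S e H he hpar hbic hT hE0
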